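/- arXiv:2001.02735 — 2 statements merged into one kernel-verified Lean document; each statement's English description precedes it below -/
import Mathlib

section
/- Let δ < 0 and a := (1−δ)/2, let b : [0,∞) → ℝ be continuous, and let H^b(s,t,z) denote the complex Bessel flow. Then for every 0 ≤ s ≤ t, the map z ↦ H^b(s,t,z) is injective on ℍ; that is, if z, w ∈ ℍ and z ≠ w, then H^b(s,t,z) ≠ H^b(s,t,w). -/
open MeasureTheory Set

noncomputable section

/-- `H` is a continuous solution on `[s,∞)` of the integrated complex Bessel equation
`H_t = z + (b_t − b_s) − a ∫_s^t (1/H_r) dr`. -/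
def IsCBesselFlow (a : ℝ) (b : ℝ → ℝ) (s : ℝ) (z : ℂ) (H : ℝ → ℂ) : Prop :=
  ContinuousOn H (Set.Ici s) ∧
    ∀ t ∈ Set.Ici s, H t = z + ((b t : ℂ) - (b s : ℂ)) - (a : ℂ) * ∫ r in s..t, (H r)⁻¹

/-!
The driving function `b` cancels from the difference `D = H₁ − H₂` of two flows, which therefore
solves the linear equation `dD = a D / (H₁ H₂) dt` with a coefficient that is continuous because
the flows stay in the upper half-plane. Hence `D_t = (z − w) exp (∫_s^t a / (H₁ H₂))`, which
vanishes only if `z = w`.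
-/

namespace ContinuousOn

variable {E : Type*} [NormedAddCommGroup E] {f : ℝ → E} {s x : ℝ}

theorem intervalIntegrable_of_le (hf : ContinuousOn f (Ici s)) (hx : s ≤ x) :
    IntervalIntegrable f volume s x :=
  (hf.mono (uIcc_of_le hx ▸ Icc_subset_Ici_self)).intervalIntegrable

theorem hasDerivWithinAt_integral_Ici [NormedSpace ℝ E] [CompleteSpace E] (hf : ContinuousOn f (Ici s)) (hx : s ≤ x) :
    HasDerivWithinAt (fun u => ∫ r in s..u, f r) (f x) (Ici x) x :=
  intervalIntegral.integral_hasDerivWithinAt_right (hf.intervalIntegrable_of_le hx)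
    ((hf.stronglyMeasurableAtFilter_nhdsWithin measurableSet_Ici x).filter_mono
      (nhdsWithin_mono _ (Ioi_subset_Ici hx)))
    ((hf x hx).mono (Ioi_subset_Ici hx))

end ContinuousOn

theorem eq_mul_exp_integral_of_eq_add_integral {c D : ℝ → ℂ} {s : ℝ}
    (hc : ContinuousOn c (Ici s)) (hD : ContinuousOn D (Ici s))
    (heq : ∀ u ∈ Ici s, D u = D s + ∫ r in s..u, c r * D r) :
    ∀ t ∈ Ici s, D t = D s * Complex.exp (∫ r in s..t, c r) := by
  intro t (ht : s ≤ t)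
  set I : ℝ → ℂ := fun u => ∫ r in s..u, c r
  have hD' (x : ℝ) (hx : x ∈ Ici s) : HasDerivWithinAt D (c x * D x) (Ici x) x :=
    (((hc.mul hD).hasDerivWithinAt_integral_Ici hx).const_add (D s)).congr
      (fun u hu => heq u (Ici_subset_Ici.mpr hx hu)) (heq x hx)
  have hIcont : ContinuousOn I (Icc s t) := by
    simpa only [uIcc_of_le ht] using
      intervalIntegral.continuousOn_primitive_interval' (hc.intervalIntegrable_of_le ht)
        left_mem_uIcc
  -- the integrating factor `exp (-I)` turns the equation into `(D * exp (-I))' = 0`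
  have hconst := constant_of_has_deriv_right_zero (f := fun u => D u * Complex.exp (-I u))
    ((hD.mono Icc_subset_Ici_self).mul hIcont.neg.cexp)
    (fun x hx => by
      have hI' : HasDerivWithinAt I (c x) (Ici x) x := hc.hasDerivWithinAt_integral_Ici hx.1
      have hF : HasDerivWithinAt (fun u => D u * Complex.exp (-I u))
          (c x * D x * Complex.exp (-I x) + D x * (Complex.exp (-I x) * -c x)) (Ici x) x :=
        (hD' x hx.1).mul hI'.neg.cexp
      exact hF.congr_deriv (by ring))
    t ⟨ht, le_rfl⟩
  simpa only [I, intervalIntegral.integral_same, neg_zero, Complex.exp_zero, mul_one,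
    Complex.exp_neg, ← div_eq_mul_inv, div_eq_iff (Complex.exp_ne_zero _)] using hconst

namespace IsCBesselFlow

variable {a : ℝ} {b : ℝ → ℝ} {s : ℝ} {z w : ℂ} {H H₁ H₂ : ℝ → ℂ}

theorem apply_self (h : IsCBesselFlow a b s z H) : H s = z := by
  simpa using h.2 s (mem_Ici.mpr le_rfl)

theorem intervalIntegrable_inv (h : IsCBesselFlow a b s z H) (hne : ∀ r ∈ Ici s, H r ≠ 0)
    {u : ℝ} (hu : s ≤ u) : IntervalIntegrable (fun r => (H r)⁻¹) volume s u :=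
  (h.1.inv₀ hne).intervalIntegrable_of_le hu

theorem sub_eq_add_integral (h₁ : IsCBesselFlow a b s z H₁) (h₂ : IsCBesselFlow a b s w H₂)
    (hne₁ : ∀ r ∈ Ici s, H₁ r ≠ 0) (hne₂ : ∀ r ∈ Ici s, H₂ r ≠ 0) :
    ∀ u ∈ Ici s, H₁ u - H₂ u =
      (H₁ s - H₂ s) + ∫ r in s..u, (a / (H₁ r * H₂ r)) * (H₁ r - H₂ r) := by
  intro u (hu : s ≤ u)
  have hcongr : EqOn (fun r => (a / (H₁ r * H₂ r)) * (H₁ r - H₂ r))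
      (fun r => a * ((H₂ r)⁻¹ - (H₁ r)⁻¹)) (uIcc s u) := by
    intro r hr
    have hr' : r ∈ Ici s := (uIcc_of_le hu ▸ hr).1
    field_simp [hne₁ r hr', hne₂ r hr']
  rw [intervalIntegral.integral_congr hcongr, intervalIntegral.integral_const_mul,
    intervalIntegral.integral_sub (h₂.intervalIntegrable_inv hne₂ hu)
      (h₁.intervalIntegrable_inv hne₁ hu),
    h₁.2 u hu, h₂.2 u hu, h₁.apply_self, h₂.apply_self]
  ring

end IsCBesselFlow

theorem complex_bessel_flow_injective_general
    (a : ℝ)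
    (b : ℝ → ℝ)
    (s : ℝ)
    (z w : ℂ) (hzw : z ≠ w)
    (H₁ : ℝ → ℂ) (hH₁ : IsCBesselFlow a b s z H₁)
    (hIm₁ : ∀ r ∈ Set.Ici s, 0 < (H₁ r).im)
    (H₂ : ℝ → ℂ) (hH₂ : IsCBesselFlow a b s w H₂)
    (hIm₂ : ∀ r ∈ Set.Ici s, 0 < (H₂ r).im) :
    ∀ t ∈ Set.Ici s, H₁ t ≠ H₂ t := by
  have hne₁ : ∀ r ∈ Ici s, H₁ r ≠ 0 := fun r hr => ne_of_apply_ne Complex.im (hIm₁ r hr).ne'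
  have hne₂ : ∀ r ∈ Ici s, H₂ r ≠ 0 := fun r hr => ne_of_apply_ne Complex.im (hIm₂ r hr).ne'
  intro t ht heq
  have hexp := eq_mul_exp_integral_of_eq_add_integral (D := fun r => H₁ r - H₂ r)
    (c := fun r => a / (H₁ r * H₂ r))
    (continuousOn_const.div (hH₁.1.mul hH₂.1) fun r hr => mul_ne_zero (hne₁ r hr) (hne₂ r hr))
    (hH₁.1.sub hH₂.1) (hH₁.sub_eq_add_integral hH₂ hne₁ hne₂) t ht
  rw [heq, sub_self, hH₁.apply_self, hH₂.apply_self, eq_comm, mul_eq_zero, sub_eq_zero] at hexp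
  exact hexp.elim hzw (Complex.exp_ne_zero _)

/-- Injectivity of the complex Bessel flow in the initial condition: if `z ≠ w` in the upper
half-plane and `H₁`, `H₂` are the flows started at `z`, `w` respectively at time `s`, then
`H₁ t ≠ H₂ t` for every `t ≥ s`. -/
theorem complex_bessel_flow_injective
    (δ : ℝ) (hδ : δ < 0) (a : ℝ) (ha : a = (1 - δ) / 2)
    (b : ℝ → ℝ) (hb : ContinuousOn b (Set.Ici (0 : ℝ)))
    (s : ℝ) (hs : 0 ≤ s)
    (z w : ℂ) (hz : 0 < z.im) (hw : 0 < w.im) (hzw : z ≠ w)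
    (H₁ : ℝ → ℂ) (hH₁ : IsCBesselFlow a b s z H₁)
    (hIm₁ : ∀ r ∈ Set.Ici s, 0 < (H₁ r).im)
    (H₂ : ℝ → ℂ) (hH₂ : IsCBesselFlow a b s w H₂)
    (hIm₂ : ∀ r ∈ Set.Ici s, 0 < (H₂ r).im) :
    ∀ t ∈ Set.Ici s, H₁ t ≠ H₂ t :=
  complex_bessel_flow_injective_general a b s z w hzw H₁ hH₁ hIm₁ H₂ hH₂ hIm₂
end
end

section
/- Let δ < 0 and a := (1−δ)/2, let b : [0,∞) → ℝ be continuous, let s ≥ 0 and 0 < x < x̃. Let X and X̃ be the real Bessel flows started at x and x̃ at time s, with hitting times of zero T^{s,x} and T^{s,x̃} respectively. Then X_t < X̃_t for all t ∈ [s, min(T^{s,x}, T^{s,x̃})), and T^{s,x} ≤ T^{s,x̃} (as elements of (s,∞]). -/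
open MeasureTheory Set Filter

noncomputable section

/-- `X` is a continuous positive solution on `[s,T)` of the integrated real Bessel equation
`X_t = x + (b_t − b_s) − a ∫_s^t (1/X_r) dr`, where `T ∈ (s,∞]` is an extended real. -/
def IsRealBesselSol (a : ℝ) (b : ℝ → ℝ) (s x : ℝ) (T : EReal) (X : ℝ → ℝ) : Prop :=
  ContinuousOn X {t : ℝ | s ≤ t ∧ (t : EReal) < T} ∧
    ∀ t : ℝ, s ≤ t → (t : EReal) < T →
      0 < X t ∧ X t = x + (b t - b s) - a * ∫ r in s..t, (X r)⁻¹

/-- `X` is the maximal positive solution of the real Bessel equation started at `x` at time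
`s`, with hitting time of zero `T`. -/
def IsMaxRealBesselSol (a : ℝ) (b : ℝ → ℝ) (s x : ℝ) (T : EReal) (X : ℝ → ℝ) : Prop :=
  (s : EReal) < T ∧ IsRealBesselSol a b s x T X ∧
    ∀ (T' : EReal) (X' : ℝ → ℝ), (s : EReal) < T' → IsRealBesselSol a b s x T' X' → T' ≤ T


/-! Before the first time `t₁` at which `X̃ - X` vanishes, `1 / X̃ < 1 / X`, so
`X̃ t₁ - X t₁ = (x̃ - x) + a ∫ (1 / X - 1 / X̃) ≥ x̃ - x > 0`: the flows never meet.
If `T̃ < T`, then `X` is bounded below by some `m > 0` on the compact `[s, T̃]`, hence `X̃ ≥ m`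
on `[s, T̃)`. Then `1 / X̃` is integrable up to `T̃`, the integral equation extends `X̃`
continuously to `[s, T̃]` with `X̃ ≥ m`, and Picard–Lindelöf applied to `X̃ - b` continues it
beyond `T̃`, contradicting maximality. -/

open scoped NNReal

lemma abs_inv_sub_inv_le_of_le {ε p q : ℝ} (hε : 0 < ε) (hp : ε ≤ p) (hq : ε ≤ q) :
    |p⁻¹ - q⁻¹| ≤ |p - q| / ε ^ 2 := by
  have hp₀ : 0 < p := hε.trans_le hp
  have hq₀ : 0 < q := hε.trans_le hq
  rw [inv_sub_inv hp₀.ne' hq₀.ne', abs_div, abs_sub_comm, abs_of_pos (mul_pos hp₀ hq₀)]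
  gcongr
  nlinarith

lemma intervalIntegrable_of_continuousOn_Ioo_of_norm_le {E : Type*} [NormedAddCommGroup E]
    {f : ℝ → E} {s t C : ℝ} (hst : s ≤ t) (hf : ContinuousOn f (Ioo s t))
    (hC : ∀ r ∈ Ioo s t, ‖f r‖ ≤ C) : IntervalIntegrable f volume s t := by
  rw [intervalIntegrable_iff_integrableOn_Ioo_of_le hst]
  exact IntegrableOn.of_bound measure_Ioo_lt_top (hf.aestronglyMeasurable measurableSet_Ioo) C
    ((ae_restrict_mem measurableSet_Ioo).mono hC)

lemma exists_first_nonpos_of_continuousOn {f : ℝ → ℝ} {s t : ℝ} (hf : ContinuousOn f (Icc s t))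
    (hst : s ≤ t) (ht : f t ≤ 0) :
    ∃ t₁ ∈ Icc s t, f t₁ ≤ 0 ∧ ∀ r ∈ Ico s t₁, 0 < f r := by
  have hcompact : IsCompact (Icc s t ∩ f ⁻¹' Iic 0) :=
    isCompact_Icc.of_isClosed_subset (hf.preimage_isClosed_of_isClosed isClosed_Icc isClosed_Iic)
      inter_subset_left
  obtain ⟨t₁, ⟨ht₁, hft₁⟩, hleast⟩ := hcompact.exists_isLeast ⟨t, ⟨hst, le_rfl⟩, ht⟩
  refine ⟨t₁, ht₁, hft₁, fun r hr => ?_⟩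
  by_contra! hfr
  exact (hleast ⟨⟨hr.1, hr.2.le.trans ht₁.2⟩, hfr⟩).not_gt hr.2

theorem IsPicardLindelof.exists_continuous_mem_closedBall_eq_picard {E : Type*}
    [NormedAddCommGroup E] [NormedSpace ℝ E] [CompleteSpace E] {f : ℝ → E → E} {tmin tmax : ℝ}
    {t₀ : Icc tmin tmax} {x₀ x : E} {a r L K : ℝ≥0} (hf : IsPicardLindelof f t₀ x₀ a r L K)
    (hx : x ∈ Metric.closedBall x₀ r) :
    ∃ α : ℝ → E, Continuous α ∧ (∀ t, α t ∈ Metric.closedBall x₀ a) ∧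
      ∀ t ∈ Icc tmin tmax, α t = ODE.picard f t₀ x α t := by
  obtain ⟨α, hα⟩ := ODE.FunSpace.exists_isFixedPt_next hf hx
  refine ⟨(ODE.FunSpace.next hf hx α).compProj, ODE.FunSpace.continuous_compProj _,
    fun t => ODE.FunSpace.compProj_mem_closedBall _ hf.mul_max_le, fun t ht => ?_⟩
  rw [ODE.FunSpace.compProj_apply, ODE.FunSpace.next_apply, hα, projIcc_of_mem _ ht]

def IsRealBesselSolOn (a : ℝ) (b : ℝ → ℝ) (s x t : ℝ) (X : ℝ → ℝ) : Prop :=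
  ContinuousOn X (Icc s t) ∧
    ∀ u ∈ Icc s t, 0 < X u ∧ X u = x + (b u - b s) - a * ∫ r in s..u, (X r)⁻¹

variable {a : ℝ} {b : ℝ → ℝ} {s x : ℝ} {X : ℝ → ℝ}

namespace IsRealBesselSol

variable {T : EReal}

lemma continuousOn_Icc (hX : IsRealBesselSol a b s x T X) {u : ℝ} (hu : (u : EReal) < T) :
    ContinuousOn X (Icc s u) :=
  hX.1.mono fun _ hr => ⟨hr.1, (EReal.coe_le_coe_iff.2 hr.2).trans_lt hu⟩

lemma intervalIntegrable_inv (hX : IsRealBesselSol a b s x T X) {u : ℝ} (hsu : s ≤ u)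
    (hu : (u : EReal) < T) : IntervalIntegrable (fun r => (X r)⁻¹) volume s u :=
  ((hX.continuousOn_Icc hu).inv₀ fun r hr =>
    (hX.2 r hr.1 ((EReal.coe_le_coe_iff.2 hr.2).trans_lt hu)).1.ne').intervalIntegrable_of_Icc hsu

theorem lt_of_lt (ha : 0 ≤ a) {y : ℝ} {T' : EReal} {Y : ℝ → ℝ} (hxy : x < y)
    (hX : IsRealBesselSol a b s x T X) (hY : IsRealBesselSol a b s y T' Y) {t : ℝ} (hst : s ≤ t)
    (htT : (t : EReal) < T) (htT' : (t : EReal) < T') : X t < Y t := by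
  by_contra! hYX
  obtain ⟨t₁, ht₁, hcross, hbefore⟩ := exists_first_nonpos_of_continuousOn
    ((hY.continuousOn_Icc htT').sub (hX.continuousOn_Icc htT)) hst (sub_nonpos.2 hYX)
  have ht₁T : (t₁ : EReal) < T := (EReal.coe_le_coe_iff.2 ht₁.2).trans_lt htT
  have ht₁T' : (t₁ : EReal) < T' := (EReal.coe_le_coe_iff.2 ht₁.2).trans_lt htT'
  have hint : ∫ r in s..t₁, (Y r)⁻¹ ≤ ∫ r in s..t₁, (X r)⁻¹ :=
    intervalIntegral.integral_mono_on_of_le_Ioo ht₁.1 (hY.intervalIntegrable_inv ht₁.1 ht₁T')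
      (hX.intervalIntegrable_inv ht₁.1 ht₁T) fun r hr =>
        have hrT : (r : EReal) < T := (EReal.coe_le_coe_iff.2 hr.2.le).trans_lt ht₁T
        inv_anti₀ (hX.2 r hr.1.le hrT).1 (sub_pos.1 (hbefore r ⟨hr.1.le, hr.2⟩)).le
  have hXt₁ := (hX.2 t₁ ht₁.1 ht₁T).2
  have hYt₁ := (hY.2 t₁ ht₁.1 ht₁T').2
  have := mul_le_mul_of_nonneg_left hint ha
  rw [Pi.sub_apply] at hcross
  linarith

theorem exists_isRealBesselSolOn_of_forall_le {t m : ℝ} (hX : IsRealBesselSol a b s x t X)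
    (hb : ContinuousOn b (Icc s t)) (hst : s < t) (hm : 0 < m) (hXm : ∀ r ∈ Ico s t, m ≤ X r) :
    ∃ Y, IsRealBesselSolOn a b s x t Y := by
  set Y : ℝ → ℝ := fun u => x + (b u - b s) - a * ∫ r in s..u, (X r)⁻¹
  have hXc : ContinuousOn X (Ico s t) := hX.1.mono fun r hr => ⟨hr.1, EReal.coe_lt_coe_iff.2 hr.2⟩
  have hint : IntervalIntegrable (fun r => (X r)⁻¹) volume s t :=
    intervalIntegrable_of_continuousOn_Ioo_of_norm_le hst.le
      ((hXc.mono Ioo_subset_Ico_self).inv₀ fun r hr =>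
        (hm.trans_le (hXm r (Ioo_subset_Ico_self hr))).ne') fun r hr => by
        have hmr := hXm r (Ioo_subset_Ico_self hr)
        rw [norm_inv, Real.norm_of_nonneg (hm.le.trans hmr)]
        exact inv_anti₀ hm hmr
  have hYX : EqOn Y X (Ico s t) := fun r hr => (hX.2 r hr.1 (EReal.coe_lt_coe_iff.2 hr.2)).2.symm
  have hYc : ContinuousOn Y (Icc s t) := by
    have hprim := intervalIntegral.continuousOn_primitive_interval' hint left_mem_uIcc
    rw [uIcc_of_le hst.le] at hprim
    exact (continuousOn_const.add (hb.sub continuousOn_const)).sub (continuousOn_const.mul hprim)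
  have hYm : ∀ u ∈ Icc s t, m ≤ Y u := fun u hu =>
    continuousWithinAt_const.closure_le ((closure_Ico hst.ne).symm ▸ hu)
      ((hYc u hu).mono Ico_subset_Icc_self) fun r hr => (hXm r hr).trans_eq (hYX hr).symm
  refine ⟨Y, hYc, fun u hu => ⟨hm.trans_le (hYm u hu), ?_⟩⟩
  rw [intervalIntegral.integral_congr_Ioo_of_le hu.1 fun r hr =>
    congrArg Inv.inv (hYX ⟨hr.1.le, hr.2.trans_le hu.2⟩)]

end IsRealBesselSol

namespace IsRealBesselSolOn

variable {t : ℝ}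

lemma isRealBesselSol (hX : IsRealBesselSolOn a b s x t X) : IsRealBesselSol a b s x t X := by
  have hdom : {u : ℝ | s ≤ u ∧ (u : EReal) < t} ⊆ Icc s t :=
    fun u hu => ⟨hu.1, (EReal.coe_lt_coe_iff.1 hu.2).le⟩
  exact ⟨hX.1.mono hdom, fun u hsu hut => hX.2 u (hdom ⟨hsu, hut⟩)⟩

lemma piecewise {u : ℝ} {Z : ℝ → ℝ} (hX : IsRealBesselSolOn a b s x t X)
    (hZ : IsRealBesselSolOn a b t (X t) u Z) (hst : s ≤ t) (htu : t ≤ u) :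
    IsRealBesselSolOn a b s x u (fun r => if r ≤ t then X r else Z r) := by
  set W : ℝ → ℝ := fun r => if r ≤ t then X r else Z r
  have hWX : EqOn W X (Icc s t) := fun r hr => if_pos hr.2
  have hWZ : EqOn W Z (Icc t u) := fun r hr => by
    rcases hr.1.eq_or_lt with rfl | htr
    · simpa [W] using (hZ.2 t ⟨le_rfl, htu⟩).2.symm
    · exact if_neg htr.not_ge
  have hWc : ContinuousOn W (Icc s u) := by
    rw [← Icc_union_Icc_eq_Icc hst htu]
    exact (hX.1.congr hWX).union_of_isClosed (hZ.1.congr hWZ) isClosed_Icc isClosed_Icc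
  have hWpos : ∀ r ∈ Icc s u, 0 < W r := fun r hr => by
    rcases le_total r t with hrt | htr
    · exact (hWX ⟨hr.1, hrt⟩).symm ▸ (hX.2 r ⟨hr.1, hrt⟩).1
    · exact (hWZ ⟨htr, hr.2⟩).symm ▸ (hZ.2 r ⟨htr, hr.2⟩).1
  have hint : ∀ r ∈ Icc s u, ∀ r' ∈ Icc s u, IntervalIntegrable (fun r => (W r)⁻¹) volume r r' :=
    fun r hr r' hr' => ((hWc.inv₀ fun q hq => (hWpos q hq).ne').mono
      (uIcc_subset_Icc hr hr')).intervalIntegrable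
  refine ⟨hWc, fun r hr => ⟨hWpos r hr, ?_⟩⟩
  rcases le_total r t with hrt | htr
  · have hXint : ∫ q in s..r, (W q)⁻¹ = ∫ q in s..r, (X q)⁻¹ :=
      intervalIntegral.integral_congr fun q hq =>
        have hq : q ∈ Icc s r := uIcc_of_le hr.1 ▸ hq
        congrArg Inv.inv (hWX ⟨hq.1, hq.2.trans hrt⟩)
    rw [hWX ⟨hr.1, hrt⟩, (hX.2 r ⟨hr.1, hrt⟩).2, hXint]
  · have hsplit := intervalIntegral.integral_add_adjacent_intervals
      (hint s ⟨le_rfl, hst.trans htu⟩ t ⟨hst, htu⟩) (hint t ⟨hst, htu⟩ r hr)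
    have hXint : ∫ q in s..t, (W q)⁻¹ = ∫ q in s..t, (X q)⁻¹ :=
      intervalIntegral.integral_congr fun q hq => congrArg Inv.inv (hWX (uIcc_of_le hst ▸ hq))
    have hZint : ∫ q in t..r, (W q)⁻¹ = ∫ q in t..r, (Z q)⁻¹ :=
      intervalIntegral.integral_congr fun q hq =>
        have hq : q ∈ Icc t r := uIcc_of_le htr ▸ hq
        congrArg Inv.inv (hWZ ⟨hq.1, hq.2.trans hr.2⟩)
    rw [hWZ ⟨htr, hr.2⟩, (hZ.2 r ⟨htr, hr.2⟩).2, (hX.2 t ⟨hst, le_rfl⟩).2, ← hsplit, hXint, hZint]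
    ring

end IsRealBesselSolOn

lemma quarter_le_add_of_mem_closedBall {c w β β₀ : ℝ}
    (hw : w ∈ Metric.closedBall (c - β₀) (c / 2)) (hβ : |β - β₀| ≤ c / 4) : c / 4 ≤ w + β := by
  rw [Metric.mem_closedBall, Real.dist_eq] at hw
  linarith [(abs_le.1 hw).1, (abs_le.1 hβ).1]

/-- For `Y = X - b` the Bessel equation is the ODE `Y' = -a / (Y + b)`; on the ball around
`c - b t` the denominator stays above `c / 4`. -/
lemma isPicardLindelof_bessel (ha : 0 < a) {t u c : ℝ} (hc : 0 < c) (htu : t ≤ u)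
    (hb : ContinuousOn b (Icc t u)) (hbt : ∀ r ∈ Icc t u, |b r - b t| ≤ c / 4)
    (hu : u - t ≤ c ^ 2 / (8 * a)) :
    IsPicardLindelof (fun r w => -(a * (w + b r)⁻¹)) ⟨t, left_mem_Icc.2 htu⟩ (c - b t)
      ⟨c / 2, by positivity⟩ 0 ⟨4 * a / c, by positivity⟩ ⟨16 * a / c ^ 2, by positivity⟩ := by
  have hkey : ∀ r ∈ Icc t u, ∀ w ∈ Metric.closedBall (c - b t) (c / 2), c / 4 ≤ w + b r :=
    fun r hr w hw => quarter_le_add_of_mem_closedBall hw (hbt r hr)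
  refine ⟨fun r hr => LipschitzOnWith.of_dist_le_mul fun w hw w' hw' => ?_, fun w hw => ?_,
    fun r hr w hw => ?_, ?_⟩
  · have hinv := abs_inv_sub_inv_le_of_le (by positivity) (hkey r hr w hw) (hkey r hr w' hw')
    rw [add_sub_add_right_eq_sub] at hinv
    simp only [dist_neg_neg, Real.dist_eq, ← mul_sub, abs_mul, abs_of_pos ha]
    calc a * |(w + b r)⁻¹ - (w' + b r)⁻¹| ≤ a * (|w - w'| / (c / 4) ^ 2) := by gcongr
      _ = 16 * a / c ^ 2 * |w - w'| := by field_simp; ring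
  · exact (continuousOn_const.mul ((continuousOn_const.add hb).inv₀ fun r hr =>
      ((by positivity : (0 : ℝ) < c / 4).trans_le (hkey r hr w hw)).ne')).neg
  · have hpos : 0 < c / 4 := by positivity
    rw [norm_neg, norm_mul, norm_inv, Real.norm_of_nonneg ha.le,
      Real.norm_of_nonneg (hpos.le.trans (hkey r hr w hw))]
    calc a * (w + b r)⁻¹ ≤ a * (c / 4)⁻¹ := by gcongr; exact hkey r hr w hw
      _ = 4 * a / c := by field_simp
  · simp only [NNReal.coe_zero, sub_self, sub_zero, max_eq_left (sub_nonneg.2 htu)]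
    calc 4 * a / c * (u - t) ≤ 4 * a / c * (c ^ 2 / (8 * a)) := by gcongr
      _ = c / 2 := by field_simp; ring

theorem exists_isRealBesselSolOn_of_pos (ha : 0 < a) {t c : ℝ} (hc : 0 < c)
    (hb : ContinuousOn b (Ici t)) : ∃ u > t, ∃ Z, IsRealBesselSolOn a b t c u Z := by
  obtain ⟨u₀, htu₀, hbu₀⟩ : ∃ u₀ > t, Icc t u₀ ⊆ b ⁻¹' Metric.closedBall (b t) (c / 4) :=
    mem_nhdsGE_iff_exists_Icc_subset.1 (hb t self_mem_Ici (Metric.closedBall_mem_nhds _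
      (by positivity)))
  set u := min u₀ (t + c ^ 2 / (8 * a))
  have htu : t < u := lt_min htu₀ (lt_add_of_pos_right t (by positivity))
  have hbu : ContinuousOn b (Icc t u) := hb.mono Icc_subset_Ici_self
  have hbt : ∀ r ∈ Icc t u, |b r - b t| ≤ c / 4 := fun r hr =>
    hbu₀ ⟨hr.1, hr.2.trans (min_le_left _ _)⟩
  have hPL := isPicardLindelof_bessel ha hc htu.le hbu hbt
    (by linarith [min_le_right u₀ (t + c ^ 2 / (8 * a))])
  obtain ⟨α, hαc, hαball, hα⟩ :=
    hPL.exists_continuous_mem_closedBall_eq_picard (Metric.mem_closedBall_self le_rfl)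
  refine ⟨u, htu, fun r => α r + b r, hαc.continuousOn.add hbu, fun r hr => ⟨?_, ?_⟩⟩
  · exact (by positivity : (0 : ℝ) < c / 4).trans_le
      (quarter_le_add_of_mem_closedBall (hαball r) (hbt r hr))
  · show α r + b r = c + (b r - b t) - a * ∫ q in t..r, (α q + b q)⁻¹
    rw [hα r hr, ODE.picard_apply, intervalIntegral.integral_neg,
      intervalIntegral.integral_const_mul]
    ring

theorem IsMaxRealBesselSol.exists_mem_Ico_lt (ha : 0 < a) (hb : ContinuousOn b (Ici s)) {t : ℝ}
    (hX : IsMaxRealBesselSol a b s x t X) {m : ℝ} (hm : 0 < m) : ∃ r ∈ Ico s t, X r < m := by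
  by_contra! hXm
  have hst : s < t := EReal.coe_lt_coe_iff.1 hX.1
  obtain ⟨Y, hY⟩ :=
    hX.2.1.exists_isRealBesselSolOn_of_forall_le (hb.mono Icc_subset_Ici_self) hst hm hXm
  obtain ⟨u, htu, Z, hZ⟩ := exists_isRealBesselSolOn_of_pos ha (hY.2 t ⟨hst.le, le_rfl⟩).1
    (hb.mono (Ici_subset_Ici.2 hst.le))
  have hW := (hY.piecewise hZ hst.le htu.le).isRealBesselSol
  have hut : u ≤ t :=
    EReal.coe_le_coe_iff.1 (hX.2.2 u _ (EReal.coe_lt_coe_iff.2 (hst.trans htu)) hW)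
  exact hut.not_gt htu

theorem real_bessel_flow_comparison_general
    (δ : ℝ) (hδ : δ < 0) (a : ℝ) (ha : a = (1 - δ) / 2)
    (b : ℝ → ℝ) (hb : ContinuousOn b (Set.Ici (0 : ℝ)))
    (s : ℝ) (hs : 0 ≤ s) (x xt : ℝ) (hxxt : x < xt)
    (T Tt : EReal) (X Xt : ℝ → ℝ)
    (hX : IsMaxRealBesselSol a b s x T X)
    (hXt : IsMaxRealBesselSol a b s xt Tt Xt) :
    (∀ t : ℝ, s ≤ t → (t : EReal) < min T Tt → X t < Xt t) ∧ T ≤ Tt := by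
  have ha₀ : 0 < a := by rw [ha]; linarith
  have hlt : ∀ t : ℝ, s ≤ t → (t : EReal) < min T Tt → X t < Xt t := fun t hst ht =>
    hX.2.1.lt_of_lt ha₀.le hxxt hXt.2.1 hst (lt_min_iff.1 ht).1 (lt_min_iff.1 ht).2
  refine ⟨hlt, ?_⟩
  by_contra! hTt
  obtain ⟨t, rfl⟩ : ∃ t : ℝ, (t : EReal) = Tt :=
    ⟨Tt.toReal, EReal.coe_toReal hTt.ne_top (ne_bot_of_gt hXt.1)⟩
  have hst : s ≤ t := (EReal.coe_lt_coe_iff.1 hXt.1).le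
  obtain ⟨r₀, hr₀, hmin⟩ :=
    isCompact_Icc.exists_isMinOn (nonempty_Icc.2 hst) (hX.2.1.continuousOn_Icc hTt)
  have hm : 0 < X r₀ := (hX.2.1.2 r₀ hr₀.1 ((EReal.coe_le_coe_iff.2 hr₀.2).trans_lt hTt)).1
  obtain ⟨r, hr, hXtr⟩ := hXt.exists_mem_Ico_lt ha₀ (hb.mono (Ici_subset_Ici.2 hs)) hm
  have hrt : (r : EReal) < t := EReal.coe_lt_coe_iff.2 hr.2
  have hXr : X r₀ ≤ X r := hmin (Ico_subset_Icc_self hr)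
  have hXXt := hlt r hr.1 (lt_min (hrt.trans hTt) hrt)
  linarith

/-- Comparison for real Bessel flows: if `0 < x < x̃` then `X_t < X̃_t` on
`[s, min(T^{s,x}, T^{s,x̃}))` and `T^{s,x} ≤ T^{s,x̃}`. -/
theorem real_bessel_flow_comparison
    (δ : ℝ) (hδ : δ < 0) (a : ℝ) (ha : a = (1 - δ) / 2)
    (b : ℝ → ℝ) (hb : ContinuousOn b (Set.Ici (0 : ℝ)))
    (s : ℝ) (hs : 0 ≤ s) (x xt : ℝ) (hx : 0 < x) (hxxt : x < xt)
    (T Tt : EReal) (X Xt : ℝ → ℝ)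
    (hX : IsMaxRealBesselSol a b s x T X)
    (hXt : IsMaxRealBesselSol a b s xt Tt Xt) :
    (∀ t : ℝ, s ≤ t → (t : EReal) < min T Tt → X t < Xt t) ∧ T ≤ Tt :=
  real_bessel_flow_comparison_general δ hδ a ha b hb s hs x xt hxxt T Tt X Xt hX hXt
end
end
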